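/- The unknown-input error covariance update map ρᵈ is concave with respect to the Loewner order: for all α ∈ [0,1] and all positive semidefinite matrices Σ₁, Σ₂, one has ρᵈ(αΣ₁ + (1−α)Σ₂) ⪰ α ρᵈ(Σ₁) + (1−α) ρᵈ(Σ₂). -/

import Mathlib

open Matrix BigOperators

noncomputable section

/-- `R̃(Σ) = C (A Σ Aᵀ + Q) Cᵀ + R`. -/
def Rt {ny nz : ℕ} (A Q : Matrix (Fin ny) (Fin ny) ℝ)
    (C : Matrix (Fin nz) (Fin ny) ℝ) (R : Matrix (Fin nz) (Fin nz) ℝ)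
    (S : Matrix (Fin ny) (Fin ny) ℝ) : Matrix (Fin nz) (Fin nz) ℝ :=
  C * (A * S * Aᵀ + Q) * Cᵀ + R

/-- Optimal unknown-input filter gain `M(Σ)`. -/
def Mg {ny nz nd : ℕ} (A Q : Matrix (Fin ny) (Fin ny) ℝ) (G : Matrix (Fin ny) (Fin nd) ℝ)
    (C : Matrix (Fin nz) (Fin ny) ℝ) (R : Matrix (Fin nz) (Fin nz) ℝ)
    (S : Matrix (Fin ny) (Fin ny) ℝ) : Matrix (Fin nd) (Fin nz) ℝ :=
  ((C * G)ᵀ * (Rt A Q C R S)⁻¹ * (C * G))⁻¹ * (C * G)ᵀ * (Rt A Q C R S)⁻¹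

/-- Optimal state filter gain `K(Σ)`. -/
def Kg {ny nz : ℕ} (A Q : Matrix (Fin ny) (Fin ny) ℝ)
    (C : Matrix (Fin nz) (Fin ny) ℝ) (R : Matrix (Fin nz) (Fin nz) ℝ)
    (S : Matrix (Fin ny) (Fin ny) ℝ) : Matrix (Fin ny) (Fin nz) ℝ :=
  (A * S * Aᵀ + Q) * Cᵀ * (Rt A Q C R S)⁻¹

/-- Closed loop matrix `Ã(Σ)`. -/
def Atil {ny nz nd : ℕ} (A Q : Matrix (Fin ny) (Fin ny) ℝ) (G : Matrix (Fin ny) (Fin nd) ℝ)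
    (C : Matrix (Fin nz) (Fin ny) ℝ) (R : Matrix (Fin nz) (Fin nz) ℝ)
    (S : Matrix (Fin ny) (Fin ny) ℝ) : Matrix (Fin ny) (Fin ny) ℝ :=
  (1 - Kg A Q C R S * C) * (1 - G * Mg A Q G C R S * C) * A

/-- `F̃(Σ)`. -/
def Ftil {ny nz nd : ℕ} (A Q : Matrix (Fin ny) (Fin ny) ℝ) (G : Matrix (Fin ny) (Fin nd) ℝ)
    (C : Matrix (Fin nz) (Fin ny) ℝ) (R : Matrix (Fin nz) (Fin nz) ℝ)
    (S : Matrix (Fin ny) (Fin ny) ℝ) : Matrix (Fin ny) (Fin ny) ℝ :=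
  -((1 - Kg A Q C R S * C) * (1 - G * Mg A Q G C R S * C))

/-- `W̃(Σ)`. -/
def Wtil {ny nz nd : ℕ} (A Q : Matrix (Fin ny) (Fin ny) ℝ) (G : Matrix (Fin ny) (Fin nd) ℝ)
    (C : Matrix (Fin nz) (Fin ny) ℝ) (R : Matrix (Fin nz) (Fin nz) ℝ)
    (S : Matrix (Fin ny) (Fin ny) ℝ) : Matrix (Fin ny) (Fin nz) ℝ :=
  G * Mg A Q G C R S - Kg A Q C R S * C * G * Mg A Q G C R S + Kg A Q C R S

/-- The state error covariance update map `ρ(Σ)`. -/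
def rho {ny nz nd : ℕ} (A Q : Matrix (Fin ny) (Fin ny) ℝ) (G : Matrix (Fin ny) (Fin nd) ℝ)
    (C : Matrix (Fin nz) (Fin ny) ℝ) (R : Matrix (Fin nz) (Fin nz) ℝ)
    (S : Matrix (Fin ny) (Fin ny) ℝ) : Matrix (Fin ny) (Fin ny) ℝ :=
  Atil A Q G C R S * S * (Atil A Q G C R S)ᵀ
    + Ftil A Q G C R S * Q * (Ftil A Q G C R S)ᵀ
    + Wtil A Q G C R S * R * (Wtil A Q G C R S)ᵀ

/-- The unknown-input error covariance update map `ρᵈ(Σ)`. -/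
def rhod {ny nz nd : ℕ} (A Q : Matrix (Fin ny) (Fin ny) ℝ) (G : Matrix (Fin ny) (Fin nd) ℝ)
    (C : Matrix (Fin nz) (Fin ny) ℝ) (R : Matrix (Fin nz) (Fin nz) ℝ)
    (S : Matrix (Fin ny) (Fin ny) ℝ) : Matrix (Fin nd) (Fin nd) ℝ :=
  ((C * G)ᵀ * (Rt A Q C R S)⁻¹ * (C * G))⁻¹

/-!
The map `X ↦ (Fᴴ X⁻¹ F)⁻¹` is a pointwise minimum of linear maps: for every left inverse `M`
of `F` one has `(Fᴴ X⁻¹ F)⁻¹ ⪯ M X Mᴴ`, because the difference is `(M - W) X (M - W)ᴴ` for the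
weighted least-squares left inverse `W = (Fᴴ X⁻¹ F)⁻¹ Fᴴ X⁻¹`, where equality holds. A minimum of
linear maps is concave, and `ρᵈ` is this map composed with the affine map `Σ ↦ R̃(Σ)`, which sends
positive semidefinite matrices to positive definite ones.
-/

open scoped ComplexOrder MatrixOrder

namespace Matrix

theorem mulVec_injective_of_rank_eq_card {K m n : Type*} [Field K] [Fintype m] [Fintype n]
    {F : Matrix m n K} (hF : F.rank = Fintype.card n) : Function.Injective F.mulVec :=
  mulVec_injective_iff.mpr <| linearIndependent_iff_card_eq_finrank_span.mpr <| by
    rw [← hF, rank_eq_finrank_span_cols]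
    rfl

variable {𝕜 m n : Type*} [RCLike 𝕜]

theorem convex_setOf_posDef : Convex ℝ {X : Matrix m m 𝕜 | X.PosDef} :=
  convex_iff_pairwise_pos.mpr fun _ hX _ hY _ _ _ ha hb _ => (hX.smul ha).add (hY.smul hb)

variable [Fintype m] [Fintype n] [DecidableEq m] [DecidableEq n]

/-- The `X⁻¹`-weighted least-squares left inverse of `F`; for `X = R̃(Σ)` and `F = C G` it is the
gain `Mg`. -/
def weightedLeftInverse (F : Matrix m n 𝕜) (X : Matrix m m 𝕜) : Matrix n m 𝕜 :=
  (Fᴴ * X⁻¹ * F)⁻¹ * Fᴴ * X⁻¹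

variable {F : Matrix m n 𝕜} {X : Matrix m m 𝕜}

theorem weightedLeftInverse_mul (hX : X.PosDef) (hF : Function.Injective F.mulVec) :
    weightedLeftInverse F X * F = 1 := by
  have hG : IsUnit (Fᴴ * X⁻¹ * F) := (hX.inv.conjTranspose_mul_mul_same hF).isUnit
  rw [weightedLeftInverse, Matrix.mul_assoc, Matrix.mul_assoc, ← Matrix.mul_assoc Fᴴ]
  exact nonsing_inv_mul _ ((isUnit_iff_isUnit_det _).mp hG)

theorem weightedLeftInverse_mul_mul_conjTranspose (hX : IsUnit X) {M : Matrix n m 𝕜}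
    (hM : M * F = 1) : weightedLeftInverse F X * X * Mᴴ = (Fᴴ * X⁻¹ * F)⁻¹ := by
  calc weightedLeftInverse F X * X * Mᴴ = (Fᴴ * X⁻¹ * F)⁻¹ * (M * F)ᴴ := by
        rw [weightedLeftInverse, Matrix.mul_assoc _ X⁻¹,
          nonsing_inv_mul _ ((isUnit_iff_isUnit_det _).mp hX), Matrix.mul_one, conjTranspose_mul,
          Matrix.mul_assoc]
    _ = (Fᴴ * X⁻¹ * F)⁻¹ := by rw [hM, conjTranspose_one, Matrix.mul_one]

theorem inv_conjTranspose_mul_inv_mul_le (hX : X.PosDef) (hF : Function.Injective F.mulVec)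
    {M : Matrix n m 𝕜} (hM : M * F = 1) : (Fᴴ * X⁻¹ * F)⁻¹ ≤ M * X * Mᴴ := by
  set W := weightedLeftInverse F X
  set g := (Fᴴ * X⁻¹ * F)⁻¹
  have hg : g.IsHermitian := (isHermitian_conjTranspose_mul_mul F hX.inv.isHermitian).inv
  have hWXM : W * X * Mᴴ = g := weightedLeftInverse_mul_mul_conjTranspose hX.isUnit hM
  have hWXW : W * X * Wᴴ = g :=
    weightedLeftInverse_mul_mul_conjTranspose hX.isUnit (weightedLeftInverse_mul hX hF)
  have hMXW : M * X * Wᴴ = g := by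
    simpa only [conjTranspose_mul, conjTranspose_conjTranspose, hX.isHermitian.eq, hg.eq,
      Matrix.mul_assoc] using congrArg conjTranspose hWXM
  have hsquare : M * X * Mᴴ - g = (M - W) * X * (M - W)ᴴ := by
    simp only [conjTranspose_sub, Matrix.sub_mul, Matrix.mul_sub]
    rw [hWXM, hWXW, hMXW]
    abel
  rw [le_iff, hsquare]
  exact hX.posSemidef.mul_mul_conjTranspose_same _

theorem concaveOn_inv_conjTranspose_mul_inv_mul (hF : Function.Injective F.mulVec) :
    ConcaveOn ℝ {X : Matrix m m 𝕜 | X.PosDef} fun X => (Fᴴ * X⁻¹ * F)⁻¹ := by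
  refine ⟨convex_setOf_posDef, fun X hX Y hY a b ha hb hab => ?_⟩
  have hZ : (a • X + b • Y).PosDef := convex_setOf_posDef hX hY ha hb hab
  set W := weightedLeftInverse F (a • X + b • Y)
  have hW : W * F = 1 := weightedLeftInverse_mul hZ hF
  calc a • (Fᴴ * X⁻¹ * F)⁻¹ + b • (Fᴴ * Y⁻¹ * F)⁻¹
      ≤ a • (W * X * Wᴴ) + b • (W * Y * Wᴴ) :=
        add_le_add (smul_le_smul_of_nonneg_left (inv_conjTranspose_mul_inv_mul_le hX hF hW) ha)
          (smul_le_smul_of_nonneg_left (inv_conjTranspose_mul_inv_mul_le hY hF hW) hb)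
    _ = W * (a • X + b • Y) * Wᴴ := by
        simp only [Matrix.mul_add, Matrix.add_mul, Matrix.mul_smul, Matrix.smul_mul]
    _ = (Fᴴ * (a • X + b • Y)⁻¹ * F)⁻¹ := weightedLeftInverse_mul_mul_conjTranspose hZ.isUnit hW

end Matrix

section Rt

variable {ny nz : ℕ} (A : Matrix (Fin ny) (Fin ny) ℝ) (C : Matrix (Fin nz) (Fin ny) ℝ)

theorem Rt_posDef {Q : Matrix (Fin ny) (Fin ny) ℝ} {R : Matrix (Fin nz) (Fin nz) ℝ}
    (hQ : Q.PosSemidef) (hR : R.PosDef) {S : Matrix (Fin ny) (Fin ny) ℝ} (hS : S.PosSemidef) :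
    (Rt A Q C R S).PosDef := by
  simpa only [Rt, conjTranspose_eq_transpose_of_trivial] using
    PosDef.posSemidef_add
      (((hS.mul_mul_conjTranspose_same A).add hQ).mul_mul_conjTranspose_same C) hR

theorem Rt_smul_add_one_sub_smul (Q : Matrix (Fin ny) (Fin ny) ℝ) (R : Matrix (Fin nz) (Fin nz) ℝ)
    (a : ℝ) (S₁ S₂ : Matrix (Fin ny) (Fin ny) ℝ) :
    Rt A Q C R (a • S₁ + (1 - a) • S₂) = a • Rt A Q C R S₁ + (1 - a) • Rt A Q C R S₂ := by
  simp only [Rt, Matrix.mul_add, Matrix.add_mul, Matrix.mul_smul, Matrix.smul_mul]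
  module

end Rt

end

/-- the unknown-input error covariance update map `ρᵈ` is concave
w.r.t. the Loewner order: for `α ∈ [0,1]` and PSD `Σ₁, Σ₂`,
`ρᵈ(αΣ₁ + (1−α)Σ₂) ⪰ α ρᵈ(Σ₁) + (1−α) ρᵈ(Σ₂)`. -/
theorem input_update_concave {ny nz nd : ℕ}
    (A Q : Matrix (Fin ny) (Fin ny) ℝ) (G : Matrix (Fin ny) (Fin nd) ℝ)
    (C : Matrix (Fin nz) (Fin ny) ℝ) (R : Matrix (Fin nz) (Fin nz) ℝ)
    (hQ : Q.PosDef) (hR : R.PosDef) (hF : (C * G).rank = nd)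
    (α : ℝ) (hα0 : 0 ≤ α) (hα1 : α ≤ 1)
    (S1 S2 : Matrix (Fin ny) (Fin ny) ℝ)
    (h1 : S1.PosSemidef) (h2 : S2.PosSemidef) :
    (rhod A Q G C R (α • S1 + (1 - α) • S2)
      - (α • rhod A Q G C R S1 + (1 - α) • rhod A Q G C R S2)).PosSemidef := by
  have hCG : Function.Injective (C * G).mulVec :=
    mulVec_injective_of_rank_eq_card (by rw [hF, Fintype.card_fin])
  have hconcave := (concaveOn_inv_conjTranspose_mul_inv_mul hCG).2
    (Rt_posDef A C hQ.posSemidef hR h1) (Rt_posDef A C hQ.posSemidef hR h2)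
    hα0 (sub_nonneg.mpr hα1) (add_sub_cancel α 1)
  rw [← Rt_smul_add_one_sub_smul] at hconcave
  simpa only [rhod, conjTranspose_eq_transpose_of_trivial] using le_iff.mp hconcave
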